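/- Let n and p be natural numbers, let c ∈ ℝ^p and x ∈ ℝ^d be vectors, let A be a real p×d matrix, Γ a real p×n matrix, Ω a symmetric positive semidefinite real p×p matrix and λ ∈ ℝ^p. Set m := λ − Ω c and M := Γᵀ Ω Γ + I_n. Then ∫_{ℝ^n} φ_n(ξ) · exp(−(1/2)·((c + A x + Γ ξ)ᵀ Ω (c + A x + Γ ξ) − 2 λᵀ (c + A x + Γ ξ))) dξ = (det M)^{−1/2} · exp(−γ/2), where γ = (A x)ᵀ (Ω − Ω Γ M⁻¹ Γᵀ Ω) (A x) − 2 xᵀ Aᵀ (I_p − Ω Γ M⁻¹ Γᵀ) m + cᵀ Ω c − 2 λᵀ c − (Γᵀ m)ᵀ M⁻¹ (Γᵀ m). -/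

import Mathlib

/-!
Along `z = b + Γ ξ` with `b = c + A x`, the exponent `zᵀ Ω z - 2 λᵀ z` plus the Gaussian's `ξᵀ ξ`
is a quadratic function of `ξ` with matrix `M = Γᵀ Ω Γ + 1` and linear part `v = Γᵀ (λ - Ω b)`.
Completing the square and substituting `ξ ↦ M^{1/2} ξ` integrates it to
`(2π)^{n/2} (det M)^{-1/2} exp (vᵀ M⁻¹ v / 2)`, and `γ = bᵀ Ω b - 2 λᵀ b - vᵀ M⁻¹ v`.
-/

open Matrix MeasureTheory Real

namespace Matrix

section Algebra

variable {R ι κ : Type*} [CommRing R] [Fintype ι] [Fintype κ]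

def quadLinForm (N : Matrix ι ι R) (v z : ι → R) : R := z ⬝ᵥ N *ᵥ z - 2 * (v ⬝ᵥ z)

theorem IsSymm.dotProduct_mulVec_comm {N : Matrix ι ι R} (hN : N.IsSymm) (y z : ι → R) :
    y ⬝ᵥ N *ᵥ z = z ⬝ᵥ N *ᵥ y := by
  simpa only [hN.eq] using (dotProduct_transpose_mulVec N z y).symm

theorem add_dotProduct_mulVec_add {N : Matrix ι ι R} (hN : N.IsSymm) (u w : ι → R) :
    (u + w) ⬝ᵥ N *ᵥ (u + w) = u ⬝ᵥ N *ᵥ u + 2 * (w ⬝ᵥ N *ᵥ u) + w ⬝ᵥ N *ᵥ w := by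
  rw [mulVec_add, add_dotProduct, dotProduct_add, dotProduct_add,
    hN.dotProduct_mulVec_comm u w]
  ring

theorem sub_dotProduct_mulVec_sub {N : Matrix ι ι R} (hN : N.IsSymm) (u w : ι → R) :
    (u - w) ⬝ᵥ N *ᵥ (u - w) = u ⬝ᵥ N *ᵥ u - 2 * (w ⬝ᵥ N *ᵥ u) + w ⬝ᵥ N *ᵥ w := by
  rw [mulVec_sub, sub_dotProduct, dotProduct_sub, dotProduct_sub,
    hN.dotProduct_mulVec_comm u w]
  ring

theorem mulVec_dotProduct_mulVec (Γ : Matrix ι κ R) (N : Matrix ι ι R) (u w : κ → R) :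
    Γ *ᵥ u ⬝ᵥ N *ᵥ (Γ *ᵥ w) = u ⬝ᵥ (Γᵀ * N * Γ) *ᵥ w := by
  rw [← mulVec_mulVec, ← mulVec_mulVec, dotProduct_transpose_mulVec, dotProduct_comm]

theorem mulVec_dotProduct (Γ : Matrix ι κ R) (u : κ → R) (w : ι → R) :
    Γ *ᵥ u ⬝ᵥ w = u ⬝ᵥ Γᵀ *ᵥ w := by
  rw [dotProduct_transpose_mulVec, dotProduct_comm]

theorem quadLinForm_eq_sub_dotProduct_mulVec_sub [DecidableEq ι] {M : Matrix ι ι R}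
    (hM : M.IsSymm) (hdet : IsUnit M.det) (v ξ : ι → R) :
    quadLinForm M v ξ = (ξ - M⁻¹ *ᵥ v) ⬝ᵥ M *ᵥ (ξ - M⁻¹ *ᵥ v) - v ⬝ᵥ M⁻¹ *ᵥ v := by
  have hMμ : M *ᵥ (M⁻¹ *ᵥ v) = v := by rw [mulVec_mulVec, mul_nonsing_inv M hdet, one_mulVec]
  rw [quadLinForm, sub_dotProduct_mulVec_sub hM, hM.dotProduct_mulVec_comm (M⁻¹ *ᵥ v),
    hMμ, dotProduct_comm (M⁻¹ *ᵥ v) v, dotProduct_comm ξ v]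
  ring

theorem quadLinForm_add_one [DecidableEq ι] (N : Matrix ι ι R) (v ξ : ι → R) :
    quadLinForm (N + 1) v ξ = quadLinForm N v ξ + ξ ⬝ᵥ ξ := by
  rw [quadLinForm, quadLinForm, add_mulVec, one_mulVec, dotProduct_add]
  ring

theorem quadLinForm_add_mulVec {Ω : Matrix ι ι R} (hΩ : Ω.IsSymm) (Γ : Matrix ι κ R)
    (lam b : ι → R) (ξ : κ → R) :
    quadLinForm Ω lam (b + Γ *ᵥ ξ)
      = quadLinForm (Γᵀ * Ω * Γ) (Γᵀ *ᵥ (lam - Ω *ᵥ b)) ξ + quadLinForm Ω lam b := by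
  rw [quadLinForm, quadLinForm, quadLinForm, add_dotProduct_mulVec_add hΩ,
    mulVec_dotProduct_mulVec, mulVec_dotProduct, dotProduct_add, mulVec_sub, sub_dotProduct,
    dotProduct_comm (Γᵀ *ᵥ lam), dotProduct_comm (Γᵀ *ᵥ (Ω *ᵥ b)), dotProduct_comm lam (Γ *ᵥ ξ),
    mulVec_dotProduct]
  ring

theorem quadLinForm_add_sub_dotProduct_mulVec [DecidableEq ι] {Ω : Matrix ι ι R}
    {K : Matrix κ κ R} (hΩ : Ω.IsSymm) (hK : K.IsSymm) (Γ : Matrix ι κ R) (lam c a : ι → R) :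
    quadLinForm Ω lam (c + a)
        - Γᵀ *ᵥ (lam - Ω *ᵥ (c + a)) ⬝ᵥ K *ᵥ (Γᵀ *ᵥ (lam - Ω *ᵥ (c + a)))
      = a ⬝ᵥ (Ω - Ω * Γ * K * Γᵀ * Ω) *ᵥ a
        - 2 * (a ⬝ᵥ (1 - Ω * Γ * K * Γᵀ) *ᵥ (lam - Ω *ᵥ c))
        + c ⬝ᵥ Ω *ᵥ c - 2 * (lam ⬝ᵥ c)
        - Γᵀ *ᵥ (lam - Ω *ᵥ c) ⬝ᵥ K *ᵥ (Γᵀ *ᵥ (lam - Ω *ᵥ c)) := by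
  set m := lam - Ω *ᵥ c
  set P := Γ * K * Γᵀ
  have hP : P.IsSymm := by
    simp only [P, IsSymm, transpose_mul, transpose_transpose, hK.eq, Matrix.mul_assoc]
  have hPΓ (u : ι → R) : Γᵀ *ᵥ u ⬝ᵥ K *ᵥ (Γᵀ *ᵥ u) = u ⬝ᵥ P *ᵥ u := by
    rw [mulVec_dotProduct_mulVec, transpose_transpose]
  have hs : lam - Ω *ᵥ (c + a) = m - Ω *ᵥ a := by
    rw [mulVec_add, sub_add_eq_sub_sub]
  have hΩP : Ω * Γ * K * Γᵀ = Ω * P := by simp only [P, Matrix.mul_assoc]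
  have hsPs : (m - Ω *ᵥ a) ⬝ᵥ P *ᵥ (m - Ω *ᵥ a)
      = m ⬝ᵥ P *ᵥ m - 2 * (a ⬝ᵥ (Ω * P) *ᵥ m) + a ⬝ᵥ (Ω * P * Ω) *ᵥ a := by
    rw [sub_dotProduct_mulVec_sub hP, mulVec_dotProduct_mulVec, hΩ.eq, mulVec_dotProduct, hΩ.eq,
      mulVec_mulVec]
  have ham : a ⬝ᵥ m = lam ⬝ᵥ a - a ⬝ᵥ Ω *ᵥ c := by
    rw [dotProduct_sub, dotProduct_comm]
  rw [hPΓ, hPΓ, hs, hsPs, hΩP, quadLinForm, add_dotProduct_mulVec_add hΩ, dotProduct_add,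
    sub_mulVec, sub_mulVec, one_mulVec, dotProduct_sub, dotProduct_sub, ham]
  ring

end Algebra

section Integrals

variable {ι : Type*} [Fintype ι]

theorem integral_exp_neg_dotProduct_self_div_two :
    ∫ ξ : ι → ℝ, exp (-(ξ ⬝ᵥ ξ) / 2) = (2 * π) ^ ((Fintype.card ι : ℝ) / 2) := by
  have hprod (ξ : ι → ℝ) : exp (-(ξ ⬝ᵥ ξ) / 2) = ∏ i, exp (-(1 / 2) * ξ i ^ 2) := by
    rw [← exp_sum, dotProduct, ← Finset.sum_neg_distrib, Finset.sum_div]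
    exact congrArg exp (Finset.sum_congr rfl fun i _ => by ring)
  simp_rw [hprod]
  rw [volume_pi, integral_fintype_prod_eq_pow (fun t : ℝ => exp (-(1 / 2) * t ^ 2)),
    integral_gaussian, div_div_eq_mul_div, div_one, mul_comm π 2, sqrt_eq_rpow, ← rpow_natCast,
    ← rpow_mul (by positivity), one_div_mul_eq_div]

theorem integral_comp_mulVec [DecidableEq ι] {E : Type*} [NormedAddCommGroup E]
    [NormedSpace ℝ E] {S : Matrix ι ι ℝ} (hS : S.det ≠ 0) (f : (ι → ℝ) → E) :
    ∫ ξ, f (S *ᵥ ξ) = |S.det|⁻¹ • ∫ y, f y := by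
  have hdet : LinearMap.det (toLin' S) ≠ 0 := by rwa [LinearMap.det_toLin']
  have hinj : Function.Injective (toLin' S) :=
    mulVec_injective_iff_isUnit.mpr ((isUnit_iff_isUnit_det S).mpr (Ne.isUnit hS))
  have hemb : MeasurableEmbedding (toLin' S) :=
    ((toLin' S).isClosedEmbedding_of_injective (LinearMap.ker_eq_bot.mpr hinj)).measurableEmbedding
  change ∫ ξ, f (toLin' S ξ) = _
  rw [← hemb.integral_map, Real.map_linearMap_volume_pi_eq_smul_volume_pi hdet,
    integral_smul_measure, LinearMap.det_toLin', ENNReal.toReal_ofReal (abs_nonneg _), abs_inv]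

open scoped MatrixOrder in
theorem integral_exp_neg_dotProduct_mulVec_div_two [DecidableEq ι] {M : Matrix ι ι ℝ}
    (hM : M.PosDef) :
    ∫ ξ : ι → ℝ, exp (-(ξ ⬝ᵥ M *ᵥ ξ) / 2)
      = (2 * π) ^ ((Fintype.card ι : ℝ) / 2) * M.det ^ (-(1 : ℝ) / 2) := by
  set S := CFC.sqrt M
  have hS : Sᵀ = S := (CFC.sqrt_nonneg M).posSemidef.isHermitian.eq
  have hSS : S * S = M := CFC.sqrt_mul_sqrt_self M hM.posSemidef.nonneg
  have hdet : M.det = |S.det| ^ 2 := by rw [sq_abs, sq, ← det_mul, hSS]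
  have hS0 : S.det ≠ 0 := fun h => hM.det_pos.ne' (by rw [hdet, h, abs_zero, sq, zero_mul])
  have hquad (ξ : ι → ℝ) : ξ ⬝ᵥ M *ᵥ ξ = S *ᵥ ξ ⬝ᵥ S *ᵥ ξ := by
    rw [mulVec_dotProduct, hS, mulVec_mulVec, hSS]
  simp_rw [hquad]
  rw [integral_comp_mulVec hS0 (fun y => exp (-(y ⬝ᵥ y) / 2)),
    integral_exp_neg_dotProduct_self_div_two, smul_eq_mul, mul_comm, hdet, neg_div,
    rpow_neg (by positivity), ← rpow_natCast, ← rpow_mul (abs_nonneg _)]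
  norm_num

theorem integral_exp_neg_quadLinForm_div_two [DecidableEq ι] {M : Matrix ι ι ℝ} (hM : M.PosDef)
    (v : ι → ℝ) :
    ∫ ξ : ι → ℝ, exp (-quadLinForm M v ξ / 2)
      = (2 * π) ^ ((Fintype.card ι : ℝ) / 2) * M.det ^ (-(1 : ℝ) / 2)
          * exp (v ⬝ᵥ M⁻¹ *ᵥ v / 2) := by
  have hsymm : M.IsSymm := isHermitian_iff_isSymm.mp hM.isHermitian
  have hsq (ξ : ι → ℝ) : exp (-quadLinForm M v ξ / 2)
      = exp (v ⬝ᵥ M⁻¹ *ᵥ v / 2) * exp (-((ξ - M⁻¹ *ᵥ v) ⬝ᵥ M *ᵥ (ξ - M⁻¹ *ᵥ v)) / 2) := by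
    rw [quadLinForm_eq_sub_dotProduct_mulVec_sub hsymm hM.det_pos.ne'.isUnit, ← exp_add]
    ring_nf
  simp_rw [hsq]
  rw [integral_const_mul, integral_sub_right_eq_self (fun ξ => exp (-(ξ ⬝ᵥ M *ᵥ ξ) / 2)),
    integral_exp_neg_dotProduct_mulVec_div_two hM, mul_comm]

end Integrals

end Matrix

theorem gaussian_marginalization_lemma
    (n p d : ℕ) (c : Fin p → ℝ) (x : Fin d → ℝ)
    (A : Matrix (Fin p) (Fin d) ℝ) (Γ : Matrix (Fin p) (Fin n) ℝ)
    (Ω : Matrix (Fin p) (Fin p) ℝ) (hΩ : Ω.PosSemidef) (lam : Fin p → ℝ) :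
    let m : Fin p → ℝ := lam - Ω.mulVec c
    let M : Matrix (Fin n) (Fin n) ℝ := Γᵀ * Ω * Γ + 1
    let γ : ℝ :=
      (A.mulVec x) ⬝ᵥ ((Ω - Ω * Γ * M⁻¹ * Γᵀ * Ω).mulVec (A.mulVec x))
        - 2 * (x ⬝ᵥ Aᵀ.mulVec ((1 - Ω * Γ * M⁻¹ * Γᵀ).mulVec m))
        + c ⬝ᵥ Ω.mulVec c - 2 * (lam ⬝ᵥ c)
        - (Γᵀ.mulVec m) ⬝ᵥ (M⁻¹.mulVec (Γᵀ.mulVec m))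
    (∫ ξ : Fin n → ℝ,
        ((2 * Real.pi) ^ (-(n : ℝ) / 2) * Real.exp (-(ξ ⬝ᵥ ξ) / 2)) *
          Real.exp (-(1 / 2) *
            ((c + A.mulVec x + Γ.mulVec ξ) ⬝ᵥ
                Ω.mulVec (c + A.mulVec x + Γ.mulVec ξ)
              - 2 * (lam ⬝ᵥ (c + A.mulVec x + Γ.mulVec ξ)))))
      = M.det ^ (-(1 : ℝ) / 2) * Real.exp (-γ / 2) := by
  intro m M γ
  have hΩs : Ω.IsSymm := isHermitian_iff_isSymm.mp hΩ.isHermitian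
  have hM : M.PosDef := by
    simpa using PosDef.posSemidef_add (hΩ.conjTranspose_mul_mul_same Γ) PosDef.one
  have hMinv : M⁻¹.IsSymm := isHermitian_iff_isSymm.mp hM.inv.isHermitian
  set b := c + A *ᵥ x
  set v := Γᵀ *ᵥ (lam - Ω *ᵥ b)
  have hγ : γ = quadLinForm Ω lam b - v ⬝ᵥ M⁻¹ *ᵥ v := by
    rw [quadLinForm_add_sub_dotProduct_mulVec hΩs hMinv,
      mulVec_dotProduct A x ((1 - Ω * Γ * M⁻¹ * Γᵀ) *ᵥ (lam - Ω *ᵥ c))]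
  have hintegrand (ξ : Fin n → ℝ) :
      (2 * π) ^ (-(n : ℝ) / 2) * exp (-(ξ ⬝ᵥ ξ) / 2)
          * exp (-(1 / 2) * quadLinForm Ω lam (b + Γ *ᵥ ξ))
        = (2 * π) ^ (-(n : ℝ) / 2) * exp (-quadLinForm Ω lam b / 2)
          * exp (-quadLinForm M v ξ / 2) := by
    have hsplit : quadLinForm M v ξ
        = quadLinForm Ω lam (b + Γ *ᵥ ξ) + ξ ⬝ᵥ ξ - quadLinForm Ω lam b := by
      rw [quadLinForm_add_one, quadLinForm_add_mulVec hΩs]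
      ring
    rw [mul_assoc, mul_assoc, ← exp_add, ← exp_add, hsplit]
    ring_nf
  calc _ = ∫ ξ : Fin n → ℝ, (2 * π) ^ (-(n : ℝ) / 2) * exp (-quadLinForm Ω lam b / 2)
          * exp (-quadLinForm M v ξ / 2) := integral_congr_ae (.of_forall hintegrand)
    _ = (2 * π) ^ (-(n : ℝ) / 2) * exp (-quadLinForm Ω lam b / 2)
          * ((2 * π) ^ ((n : ℝ) / 2) * M.det ^ (-(1 : ℝ) / 2) * exp (v ⬝ᵥ M⁻¹ *ᵥ v / 2)) := by
      rw [integral_const_mul, integral_exp_neg_quadLinForm_div_two hM, Fintype.card_fin]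
    _ = M.det ^ (-(1 : ℝ) / 2) * exp (-γ / 2) := by
      rw [show -γ / 2 = -quadLinForm Ω lam b / 2 + v ⬝ᵥ M⁻¹ *ᵥ v / 2 by rw [hγ]; ring, exp_add,
        neg_div, rpow_neg (by positivity)]
      field_simp
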